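/- Define the projection Pr : Mat₄(ℝ) → se(3) by Pr(A) = (1/2)·diag(1,1,1,0)·(A·diag(1,1,1,2) − Aᵀ·diag(1,1,1,0)). Then for every A ∈ Mat₄(ℝ), Pr(A) lies in se(3) (its upper-left 3×3 block is skew-symmetric and its last row is zero), and Pr is the orthogonal projection onto se(3) with respect to the Frobenius inner product: for every η ∈ se(3), trace(ηᵀ A) = trace(ηᵀ Pr(A)). Moreover Pr restricted to se(3) is the identity. -/

import Mathlib

open Matrix

/-!
Entrywise, `Pr A` is `(A - Aᵀ)/2` on the upper-left `3 × 3` block, copies the first three entries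
of the last column of `A`, and vanishes on the last row; this gives `Pr A ∈ 𝔰𝔢(3)` and `Pr η = η`
for `η ∈ 𝔰𝔢(3)`. Orthogonality then needs no computation: `Pr` is self-adjoint for the Frobenius
inner product (by cyclicity and transpose-invariance of the trace, as `diag(1,1,1,0)` and
`diag(1,1,1,2)` are symmetric), so `⟨η, A⟩ = ⟨Pr η, A⟩ = ⟨η, Pr A⟩`.
-/

/-- Membership in `𝔰𝔢(3)`. -/
def isSe3 (A : Matrix (Fin 4) (Fin 4) ℝ) : Prop :=
  (∀ i j : Fin 3, A i.castSucc j.castSucc = - A j.castSucc i.castSucc) ∧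
  (∀ j : Fin 4, A 3 j = 0)

/-- The projection `Pr : Mat₄(ℝ) → 𝔰𝔢(3)`,
`Pr(A) = (1/2)·diag(1,1,1,0)·(A·diag(1,1,1,2) − Aᵀ·diag(1,1,1,0))`. -/
noncomputable def prSe (A : Matrix (Fin 4) (Fin 4) ℝ) : Matrix (Fin 4) (Fin 4) ℝ :=
  (1 / 2 : ℝ) • (Matrix.diagonal ![1, 1, 1, 0] *
    (A * Matrix.diagonal ![1, 1, 1, 2] - Aᵀ * Matrix.diagonal ![1, 1, 1, 0]))

namespace Matrix

variable {n R : Type*} [Fintype n] [CommRing R]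

theorem smul_diagonal_mul_sub_transpose_apply [DecidableEq n] (c : R) (d e : n → R)
    (A : Matrix n n R) (i j : n) :
    (c • (diagonal d * (A * diagonal e - Aᵀ * diagonal d))) i j =
      c * d i * (A i j * e j - A j i * d j) := by
  simp only [smul_apply, diagonal_mul, sub_apply, mul_diagonal, transpose_apply, smul_eq_mul,
    mul_assoc]

theorem trace_transpose_mul_sub_transpose_comm {D E : Matrix n n R} (hD : D.IsSymm)
    (hE : E.IsSymm) (X Y : Matrix n n R) :
    trace ((D * (X * E - Xᵀ * D))ᵀ * Y) = trace (Xᵀ * (D * (Y * E - Yᵀ * D))) := by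
  simp only [transpose_mul, transpose_sub, transpose_transpose, hD.eq, hE.eq, Matrix.mul_sub,
    Matrix.sub_mul, trace_sub]
  congr 1
  · rw [Matrix.mul_assoc E, Matrix.mul_assoc E, trace_mul_comm E]
    simp only [Matrix.mul_assoc]
  · rw [← trace_transpose (Xᵀ * (D * (Yᵀ * D)))]
    simp only [transpose_mul, transpose_transpose, hD.eq, ← Matrix.mul_assoc]
    rw [Matrix.mul_assoc (D * X), trace_mul_comm (D * X), ← Matrix.mul_assoc]

end Matrix

theorem prSe_apply (A : Matrix (Fin 4) (Fin 4) ℝ) (i j : Fin 4) :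
    prSe A i j = 1 / 2 * ![1, 1, 1, 0] i * (A i j * ![1, 1, 1, 2] j - A j i * ![1, 1, 1, 0] j) :=
  smul_diagonal_mul_sub_transpose_apply _ _ _ A i j

theorem trace_transpose_prSe_mul (X Y : Matrix (Fin 4) (Fin 4) ℝ) :
    trace ((prSe X)ᵀ * Y) = trace (Xᵀ * prSe Y) := by
  simp only [prSe, transpose_smul, smul_mul, Matrix.mul_smul, trace_smul,
    trace_transpose_mul_sub_transpose_comm (isSymm_diagonal _) (isSymm_diagonal _)]

theorem cons_one_one_one_castSucc (a : ℝ) (i : Fin 3) : ![1, 1, 1, a] i.castSucc = 1 := by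
  fin_cases i <;> rfl

theorem isSe3_prSe (A : Matrix (Fin 4) (Fin 4) ℝ) : isSe3 (prSe A) := by
  refine ⟨fun i j => ?_, fun j => by simp [prSe_apply]⟩
  simp only [prSe_apply, cons_one_one_one_castSucc]
  ring

theorem prSe_of_isSe3 {A : Matrix (Fin 4) (Fin 4) ℝ} (hA : isSe3 A) : prSe A = A := by
  obtain ⟨hskew, hrow⟩ := hA
  ext i j
  induction i using Fin.lastCases with
  | last => simpa [prSe_apply] using (hrow j).symm
  | cast i =>
    induction j using Fin.lastCases with
    | last =>
      rw [prSe_apply, cons_one_one_one_castSucc]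
      change 1 / 2 * 1 * (_ * 2 - _ * 0) = _
      ring
    | cast j =>
      rw [prSe_apply, cons_one_one_one_castSucc, cons_one_one_one_castSucc,
        cons_one_one_one_castSucc, hskew j i]
      ring

/-- `Pr` maps into `𝔰𝔢(3)`, is the Frobenius-orthogonal projection onto `𝔰𝔢(3)`
(i.e. `trace(ηᵀA) = trace(ηᵀ Pr A)` for all `η ∈ 𝔰𝔢(3)`), and restricts to the
identity on `𝔰𝔢(3)`. -/
theorem stmt4 :
    (∀ A : Matrix (Fin 4) (Fin 4) ℝ, isSe3 (prSe A)) ∧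
    (∀ (A η : Matrix (Fin 4) (Fin 4) ℝ), isSe3 η →
      Matrix.trace (ηᵀ * A) = Matrix.trace (ηᵀ * prSe A)) ∧
    (∀ A : Matrix (Fin 4) (Fin 4) ℝ, isSe3 A → prSe A = A) := by
  refine ⟨isSe3_prSe, fun A η hη => ?_, fun A => prSe_of_isSe3⟩
  rw [← trace_transpose_prSe_mul, prSe_of_isSe3 hη]
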